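/- Let M be a closed simply-typed λ-term of type 𝐁 = o → o → o (the Church type of booleans). Then M is βη-equivalent to 𝐭𝐫𝐮𝐞 = λx y. x if and only if the relational point ([∗] → ∅ → ∗) belongs to the relational interpretation ⟦⊢ M : 𝐁⟧ (i.e. ⊳ M : [∗] → ∅ → ∗ : 𝐁), where ∗ is a fixed atom of the base-type web, [∗] denotes the singleton multiset over ∗, and ∅ the empty multiset. -/

import Mathlib

/-! Simple types over a base type `o`, and the relational semantics
(non-idempotent intersection types): `o` is interpreted by a countably
infinite set of atoms (here `ℕ`), and `σ → τ` by finite multisets over the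
web of `σ` paired with the web of `τ`. -/

/-- Simple types over the base type `o`. -/
inductive Ty : Type
  | o : Ty
  | arrow : Ty → Ty → Ty

/-- The relational web of a simple type. -/
def Web : Ty → Type
  | .o => ℕ
  | .arrow σ τ => Multiset (Web σ) × Web τ

/-- Typed de Bruijn variables. -/
inductive Var : List Ty → Ty → Type
  | zero {Γ σ} : Var (σ :: Γ) σ
  | succ {Γ σ τ} : Var Γ σ → Var (τ :: Γ) σ

/-- Intrinsically simply-typed λ-terms. -/
inductive Tm : List Ty → Ty → Type
  | var {Γ σ} : Var Γ σ → Tm Γ σ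
  | lam {Γ σ τ} : Tm (σ :: Γ) τ → Tm Γ (Ty.arrow σ τ)
  | app {Γ σ τ} : Tm Γ (Ty.arrow σ τ) → Tm Γ σ → Tm Γ τ

/-- Renamings between contexts. -/
def Ren (Γ Δ : List Ty) : Type := ∀ σ, Var Γ σ → Var Δ σ

/-- Lifting a renaming under a binder. -/
def Ren.lift {Γ Δ : List Ty} (ρ : Ren Γ Δ) (τ : Ty) : Ren (τ :: Γ) (τ :: Δ) :=
  fun _ v =>
    match v with
    | .zero => .zero
    | .succ w => .succ (ρ _ w)

/-- Applying a renaming to a term. -/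
def rename : {Γ Δ : List Ty} → Ren Γ Δ → {σ : Ty} → Tm Γ σ → Tm Δ σ
  | _, _, ρ, _, .var v => .var (ρ _ v)
  | _, _, ρ, _, .lam M => .lam (rename (Ren.lift ρ _) M)
  | _, _, ρ, _, .app M N => .app (rename ρ M) (rename ρ N)

/-- Substitutions between contexts. -/
def Subst (Γ Δ : List Ty) : Type := ∀ σ, Var Γ σ → Tm Δ σ

/-- Lifting a substitution under a binder. -/
def Subst.lift {Γ Δ : List Ty} (s : Subst Γ Δ) (τ : Ty) : Subst (τ :: Γ) (τ :: Δ) :=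
  fun _ v =>
    match v with
    | .zero => .var .zero
    | .succ w => rename (fun _ u => Var.succ u) (s _ w)

/-- Applying a substitution to a term. -/
def subst : {Γ Δ : List Ty} → Subst Γ Δ → {σ : Ty} → Tm Γ σ → Tm Δ σ
  | _, _, s, _, .var v => s _ v
  | _, _, s, _, .lam M => .lam (subst (Subst.lift s _) M)
  | _, _, s, _, .app M N => .app (subst s M) (subst s N)

/-- The substitution replacing the last variable by `N`. -/
def Subst.cons {Γ : List Ty} {σ : Ty} (N : Tm Γ σ) : Subst (σ :: Γ) Γ :=
  fun _ v =>
    match v with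
    | .zero => N
    | .succ w => .var w

/-- Substitution of the last variable. -/
def subst1 {Γ : List Ty} {σ τ : Ty} (M : Tm (σ :: Γ) τ) (N : Tm Γ σ) : Tm Γ τ :=
  subst (Subst.cons N) M

/-- βη-convertibility of simply-typed λ-terms. -/
inductive BetaEta : {Γ : List Ty} → {σ : Ty} → Tm Γ σ → Tm Γ σ → Prop
  | refl {Γ σ} (M : Tm Γ σ) : BetaEta M M
  | symm {Γ σ} {M N : Tm Γ σ} : BetaEta M N → BetaEta N M
  | trans {Γ σ} {M N P : Tm Γ σ} : BetaEta M N → BetaEta N P → BetaEta M P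
  | app_congr {Γ σ τ} {M M' : Tm Γ (Ty.arrow σ τ)} {N N' : Tm Γ σ} :
      BetaEta M M' → BetaEta N N' → BetaEta (M.app N) (M'.app N')
  | lam_congr {Γ σ τ} {M M' : Tm (σ :: Γ) τ} : BetaEta M M' → BetaEta M.lam M'.lam
  | beta {Γ σ τ} (M : Tm (σ :: Γ) τ) (N : Tm Γ σ) : BetaEta (Tm.app M.lam N) (subst1 M N)
  | eta {Γ σ τ} (M : Tm Γ (Ty.arrow σ τ)) :
      BetaEta M (Tm.lam (Tm.app (rename (fun _ v => Var.succ v) M) (Tm.var Var.zero)))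

/-- Relational environments: a finite multiset over the web of `σ` for each
variable of type `σ` in the context. -/
def REnv (Γ : List Ty) : Type := ∀ σ, Var Γ σ → Multiset (Web σ)

/-- Extending a relational environment. -/
def REnv.cons {Γ : List Ty} {σ : Ty} (X : Multiset (Web σ)) (ρ : REnv Γ) :
    REnv (σ :: Γ) :=
  fun _ v =>
    match v with
    | .zero => X
    | .succ w => ρ _ w

/-- The empty relational environment. -/
def REnv.nil : REnv [] := fun _ v => nomatch v

/-- The relational semantics of a typing sequent: `Sem M ρ α` means that the
tuple `(ρ, α)` belongs to the relational interpretation `⟦x̄:σ̄ ⊢ M : σ⟧`. -/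
def Sem : {Γ : List Ty} → {σ : Ty} → Tm Γ σ → REnv Γ → Web σ → Prop
  | _, _, .var v, ρ, α => α ∈ ρ _ v
  | _, _, .lam M, ρ, α => Sem M (REnv.cons α.1 ρ) α.2
  | _, _, @Tm.app _ σ _ M N, ρ, α =>
      ∃ Y : Multiset (Web σ), Sem M ρ (Y, α) ∧ ∀ β ∈ Y, Sem N ρ β

/-- `RelType M α σ` (written `⊳ M : α : σ` in the paper): the point `α`
belongs to the relational interpretation of the closed term `M : σ`. -/
def RelType {σ : Ty} (M : Tm [] σ) (α : Web σ) : Prop := Sem M REnv.nil α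

/-- The Church type of booleans `𝐁 = o → o → o`. -/
def TyB : Ty := Ty.arrow .o (Ty.arrow .o .o)

/-- The Church boolean `𝐭𝐫𝐮𝐞 = λx y. x`. -/
def churchTrue : Tm [] TyB := .lam (.lam (.var (.succ .zero)))

/-- The Church boolean `𝐟𝐚𝐥𝐬𝐞 = λx y. y`. -/
def churchFalse : Tm [] TyB := .lam (.lam (.var .zero))

/-- The relational point `[∗] → ∅ → ∗` of the type `𝐁`. -/
def boolPoint (ast : Web Ty.o) : Web TyB := ({ast}, (0, ast))


/-!
Every simply-typed term is weakly β-normalising (Tait's reducibility method), and a closed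
β-normal form of type `o → o → o` is `λx y. x` or `λx y. y`, because a neutral term whose free
variables all have base type has base type itself. The relational interpretation is invariant under
β-reduction by the substitution lemma: a point lies in `⟦M[s]⟧ρ` iff `M` has it in some environment
`η` all of whose points are points of the substituted terms under `ρ`. The point `[∗] → ∅ → ∗`
belongs to `⟦true⟧` and not to `⟦false⟧`, and `true`, `false` are not βη-equivalent because they
differ in the full set-theoretic model.

η is only ever used in the set-theoretic model: this relational interpretation shares the
environment between function and argument, so it does not validate η in open contexts
(`λx. f x` has the point `[a] → b` when `f` is interpreted by `{[a, a] → b}`).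
-/

theorem rename_rename {Γ Δ Θ : List Ty} (r : Ren Γ Δ) (r' : Ren Δ Θ) {σ : Ty} (M : Tm Γ σ) :
    rename r' (rename r M) = rename (fun τ v => r' τ (r τ v)) M := by
  induction M generalizing Δ Θ with
  | var v => rfl
  | lam M ih =>
    simp only [rename, ih]
    congr 2
    funext τ v
    cases v <;> rfl
  | app M N ihM ihN => simp only [rename, ihM, ihN]

theorem rename_id {Γ σ} (M : Tm Γ σ) : rename (fun _ v => v) M = M := by
  induction M with
  | var v => rfl
  | lam M ih =>
    conv_rhs => rw [← ih]
    simp only [rename]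
    congr 2
    funext τ v
    cases v <;> rfl
  | app M N ihM ihN => simp only [rename, ihM, ihN]

theorem subst_rename {Γ Δ Θ : List Ty} (r : Ren Γ Δ) (s : Subst Δ Θ) {σ : Ty} (M : Tm Γ σ) :
    subst s (rename r M) = subst (fun τ v => s τ (r τ v)) M := by
  induction M generalizing Δ Θ with
  | var v => rfl
  | lam M ih =>
    simp only [rename, subst, ih]
    congr 2
    funext τ v
    cases v <;> rfl
  | app M N ihM ihN => simp only [rename, subst, ihM, ihN]

theorem rename_subst {Γ Δ Θ : List Ty} (s : Subst Γ Δ) (r : Ren Δ Θ) {σ : Ty} (M : Tm Γ σ) :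
    rename r (subst s M) = subst (fun τ v => rename r (s τ v)) M := by
  induction M generalizing Δ Θ with
  | var v => rfl
  | lam M ih =>
    simp only [rename, subst, ih]
    congr 2
    funext τ v
    cases v with
    | zero => rfl
    | succ w => exact (rename_rename _ _ _).trans (rename_rename r _ _).symm
  | app M N ihM ihN => simp only [rename, subst, ihM, ihN]

theorem subst_subst {Γ Δ Θ : List Ty} (s : Subst Γ Δ) (s' : Subst Δ Θ) {σ : Ty} (M : Tm Γ σ) :
    subst s' (subst s M) = subst (fun τ v => subst s' (s τ v)) M := by
  induction M generalizing Δ Θ with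
  | var v => rfl
  | lam M ih =>
    simp only [subst, ih]
    congr 2
    funext τ v
    cases v with
    | zero => rfl
    | succ w => exact (subst_rename _ _ _).trans (rename_subst s' _ _).symm
  | app M N ihM ihN => simp only [subst, ihM, ihN]

theorem subst_var_eq_rename {Γ Δ : List Ty} (r : Ren Γ Δ) {σ : Ty} (M : Tm Γ σ) :
    subst (fun τ v => .var (r τ v)) M = rename r M := by
  induction M generalizing Δ with
  | var v => rfl
  | lam M ih =>
    simp only [subst, rename, ← ih]
    congr 2
    funext τ v
    cases v <;> rfl
  | app M N ihM ihN => simp only [subst, rename, ihM, ihN]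

theorem subst_var {Γ σ} (M : Tm Γ σ) : subst (fun _ v => .var v) M = M :=
  (subst_var_eq_rename (fun _ v => v) M).trans (rename_id M)

theorem rename_subst1 {Γ Δ σ τ} (r : Ren Γ Δ) (M : Tm (σ :: Γ) τ) (N : Tm Γ σ) :
    rename r (subst1 M N) = subst1 (rename (Ren.lift r σ) M) (rename r N) := by
  simp only [subst1, rename_subst, subst_rename]
  congr 1
  funext τ v
  cases v <;> rfl

inductive BetaStep : {Γ : List Ty} → {σ : Ty} → Tm Γ σ → Tm Γ σ → Prop
  | beta {Γ σ τ} (M : Tm (σ :: Γ) τ) (N : Tm Γ σ) : BetaStep (Tm.app M.lam N) (subst1 M N)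
  | appLeft {Γ σ τ} {M M' : Tm Γ (Ty.arrow σ τ)} (N : Tm Γ σ) :
      BetaStep M M' → BetaStep (M.app N) (M'.app N)
  | appRight {Γ σ τ} (M : Tm Γ (Ty.arrow σ τ)) {N N' : Tm Γ σ} :
      BetaStep N N' → BetaStep (M.app N) (M.app N')
  | lam {Γ σ τ} {M M' : Tm (σ :: Γ) τ} : BetaStep M M' → BetaStep M.lam M'.lam

def BetaSteps {Γ : List Ty} {σ : Ty} : Tm Γ σ → Tm Γ σ → Prop :=
  Relation.ReflTransGen BetaStep

namespace Tm

mutual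
inductive Neutral : {Γ : List Ty} → {σ : Ty} → Tm Γ σ → Prop
  | var {Γ σ} (v : Var Γ σ) : Neutral (Tm.var v)
  | app {Γ σ τ} {M : Tm Γ (Ty.arrow σ τ)} {N : Tm Γ σ} : Neutral M → Normal N → Neutral (M.app N)

inductive Normal : {Γ : List Ty} → {σ : Ty} → Tm Γ σ → Prop
  | lam {Γ σ τ} {M : Tm (σ :: Γ) τ} : Normal M → Normal M.lam
  | ne {Γ σ} {M : Tm Γ σ} : Neutral M → Normal M
end

def WeaklyNormalizing {Γ : List Ty} {σ : Ty} (M : Tm Γ σ) : Prop :=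
  ∃ N, BetaSteps M N ∧ Normal N

end Tm

section Reduction

variable {Γ Δ : List Ty} {σ τ : Ty}

theorem BetaStep.rename {M M' : Tm Γ σ} (h : BetaStep M M') (r : Ren Γ Δ) :
    BetaStep (rename r M) (rename r M') := by
  induction h generalizing Δ with
  | beta M N => rw [rename_subst1]; exact .beta _ _
  | appLeft N _ ih => exact .appLeft _ (ih r)
  | appRight M _ ih => exact .appRight _ (ih r)
  | lam _ ih => exact .lam (ih _)

theorem BetaStep.betaEta {M M' : Tm Γ σ} (h : BetaStep M M') : BetaEta M M' := by
  induction h with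
  | beta M N => exact .beta M N
  | appLeft N _ ih => exact .app_congr ih (.refl N)
  | appRight M _ ih => exact .app_congr (.refl M) ih
  | lam _ ih => exact .lam_congr ih

namespace BetaSteps

theorem rename {M M' : Tm Γ σ} (h : BetaSteps M M') (r : Ren Γ Δ) :
    BetaSteps (_root_.rename r M) (_root_.rename r M') :=
  h.lift _ fun _ _ h => h.rename r

theorem appLeft {M M' : Tm Γ (Ty.arrow σ τ)} (N : Tm Γ σ) (h : BetaSteps M M') :
    BetaSteps (M.app N) (M'.app N) :=
  h.lift (Tm.app · N) fun _ _ => .appLeft N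

theorem appRight (M : Tm Γ (Ty.arrow σ τ)) {N N' : Tm Γ σ} (h : BetaSteps N N') :
    BetaSteps (M.app N) (M.app N') :=
  h.lift M.app fun _ _ => .appRight M

theorem lam {M M' : Tm (σ :: Γ) τ} (h : BetaSteps M M') : BetaSteps M.lam M'.lam :=
  h.lift Tm.lam fun _ _ => .lam

theorem betaEta {M M' : Tm Γ σ} (h : BetaSteps M M') : BetaEta M M' := by
  induction h with
  | refl => exact .refl _
  | tail _ h ih => exact ih.trans h.betaEta

end BetaSteps

namespace Tm

mutual
theorem Neutral.rename : ∀ {Γ Δ σ} {M : Tm Γ σ}, Neutral M → (r : Ren Γ Δ) →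
    Neutral (_root_.rename r M)
  | _, _, _, _, .var v, _ => .var _
  | _, _, _, _, .app hM hN, r => .app (hM.rename r) (hN.rename r)

theorem Normal.rename : ∀ {Γ Δ σ} {M : Tm Γ σ}, Normal M → (r : Ren Γ Δ) →
    Normal (_root_.rename r M)
  | _, _, _, _, .lam hM, _ => .lam (hM.rename _)
  | _, _, _, _, .ne hM, r => .ne (hM.rename r)
end

theorem WeaklyNormalizing.rename {M : Tm Γ σ} (h : WeaklyNormalizing M) (r : Ren Γ Δ) :
    WeaklyNormalizing (rename r M) :=
  let ⟨_, hMN, hN⟩ := h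
  ⟨_, hMN.rename r, hN.rename r⟩

theorem WeaklyNormalizing.of_betaStep {M M' : Tm Γ σ} (h : BetaStep M M')
    (h' : WeaklyNormalizing M') : WeaklyNormalizing M :=
  let ⟨N, hMN, hN⟩ := h'
  ⟨N, .head h hMN, hN⟩

end Tm

end Reduction

def Subst.extend {Γ Δ : List Ty} {σ : Ty} (N : Tm Δ σ) (s : Subst Γ Δ) : Subst (σ :: Γ) Δ :=
  fun _ v =>
    match v with
    | .zero => N
    | .succ w => s _ w

theorem subst1_rename_lift_subst_lift {Γ Δ Θ : List Ty} {σ τ : Ty} (s : Subst Γ Δ)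
    (r : Ren Δ Θ) (M : Tm (σ :: Γ) τ) (N : Tm Θ σ) :
    subst1 (rename (Ren.lift r σ) (subst (Subst.lift s σ) M)) N =
      subst (Subst.extend N fun τ v => rename r (s τ v)) M := by
  rw [subst1, subst_rename]
  refine (subst_subst _ _ M).trans ?_
  congr 1
  funext τ v
  cases v with
  | zero => rfl
  | succ w => exact (subst_rename _ _ _).trans (subst_var_eq_rename r _)

/-- Tait's reducibility predicate, in Kripke style: quantifying over renamings makes it stable
under weakening, which is what lets the fundamental lemma go under binders. -/
def Reducible : (σ : Ty) → {Γ : List Ty} → Tm Γ σ → Prop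
  | .o, _, M => M.WeaklyNormalizing
  | .arrow σ τ, _, M => M.WeaklyNormalizing ∧
      ∀ {Δ} (r : Ren _ Δ) (N : Tm Δ σ), Reducible σ N → Reducible τ (.app (rename r M) N)

namespace Reducible

variable {Γ Δ : List Ty}

theorem weaklyNormalizing : ∀ {σ} {M : Tm Γ σ}, Reducible σ M → M.WeaklyNormalizing
  | .o, _, h => h
  | .arrow _ _, _, h => h.1

theorem rename : ∀ {σ} {M : Tm Γ σ}, Reducible σ M → (r : Ren Γ Δ) →
    Reducible σ (_root_.rename r M)
  | .o, _, h, r => Tm.WeaklyNormalizing.rename h r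
  | .arrow _ _, _, h, r => ⟨h.1.rename r, fun r' N hN => by rw [rename_rename]; exact h.2 _ N hN⟩

theorem of_betaStep : ∀ {σ Γ} {M M' : Tm Γ σ}, BetaStep M M' → Reducible σ M' → Reducible σ M
  | .o, _, _, _, hs, h => Tm.WeaklyNormalizing.of_betaStep hs h
  | .arrow _ _, _, _, _, hs, h =>
    ⟨h.1.of_betaStep hs, fun r N hN => of_betaStep (.appLeft N (hs.rename r)) (h.2 r N hN)⟩

theorem of_betaSteps_neutral : ∀ {σ Γ} {M M' : Tm Γ σ}, BetaSteps M M' → M'.Neutral →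
    Reducible σ M
  | .o, _, _, _, hs, hne => ⟨_, hs, .ne hne⟩
  | .arrow _ _, _, _, _, hs, hne => ⟨⟨_, hs, .ne hne⟩, fun r N hN => by
      obtain ⟨N', hNN', hN'⟩ := hN.weaklyNormalizing
      exact of_betaSteps_neutral (((hs.rename r).appLeft N).trans (BetaSteps.appRight _ hNN'))
        (.app (hne.rename r) hN')⟩

theorem var (v : Var Γ σ) : Reducible σ (.var v) :=
  of_betaSteps_neutral .refl (.var v)

end Reducible

theorem reducible_subst {Γ σ} (M : Tm Γ σ) {Δ} (s : Subst Γ Δ) (hs : ∀ τ v, Reducible τ (s τ v)) :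
    Reducible σ (subst s M) := by
  induction M generalizing Δ with
  | var v => exact hs _ v
  | app M N ihM ihN =>
    have h := (ihM s hs).2 (fun _ v => v) _ (ihN s hs)
    rwa [rename_id] at h
  | lam M ih =>
    have hbody : Reducible _ (subst (Subst.lift s _) M) := ih _ fun τ v => by
      cases v with
      | zero => exact .var .zero
      | succ w => exact (hs τ w).rename _
    obtain ⟨M', hMM', hM'⟩ := hbody.weaklyNormalizing
    refine ⟨⟨M'.lam, hMM'.lam, .lam hM'⟩, fun r N hN => .of_betaStep (.beta _ N) ?_⟩
    rw [subst1_rename_lift_subst_lift]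
    exact ih _ fun τ v => by
      cases v with
      | zero => exact hN
      | succ w => exact (hs τ w).rename r

theorem Tm.weaklyNormalizing {Γ : List Ty} {σ : Ty} (M : Tm Γ σ) : M.WeaklyNormalizing := by
  simpa only [subst_var] using (reducible_subst M _ fun _ v => .var v).weaklyNormalizing

theorem Var.mem {Γ : List Ty} {σ : Ty} : Var Γ σ → σ ∈ Γ
  | .zero => List.mem_cons_self
  | .succ v => List.mem_cons_of_mem _ v.mem

theorem Tm.Neutral.eq_o : ∀ {Γ : List Ty} {σ : Ty} {M : Tm Γ σ}, M.Neutral →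
    (∀ τ ∈ Γ, τ = .o) → σ = .o
  | _, _, _, .var v, hΓ => hΓ _ v.mem
  | _, _, _, .app hM _, hΓ => Ty.noConfusion (hM.eq_o hΓ)

theorem Tm.Normal.eq_churchTrue_or_eq_churchFalse {N : Tm [] TyB} (h : N.Normal) :
    N = churchTrue ∨ N = churchFalse := by
  cases h with
  | ne hne => exact Ty.noConfusion (hne.eq_o (by simp))
  | lam h =>
    cases h with
    | ne hne => exact Ty.noConfusion (hne.eq_o (by simp))
    | lam h =>
      cases h with
      | ne hne =>
        cases hne with
        | app hM _ => exact Ty.noConfusion (hM.eq_o (by simp))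
        | var v =>
          rcases v with _ | _ | ⟨⟨⟩⟩
          · exact .inr rfl
          · exact .inl rfl

section RelationalSemantics

variable {Γ Δ : List Ty} {σ τ : Ty}

theorem sem_mono (M : Tm Γ σ) {ρ ρ' : REnv Γ} (h : ∀ τ v, ρ τ v ⊆ ρ' τ v) {α : Web σ} :
    Sem M ρ α → Sem M ρ' α := by
  induction M with
  | var v => exact fun hα => h _ v hα
  | lam M ih =>
    refine ih fun τ v => ?_
    cases v with
    | zero => exact Multiset.Subset.refl _
    | succ w => exact h τ w
  | app M N ihM ihN => exact fun ⟨Y, hM, hN⟩ => ⟨Y, ihM h hM, fun β hβ => ihN h (hN β hβ)⟩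

theorem sem_rename (M : Tm Γ σ) (r : Ren Γ Δ) (ρ : REnv Δ) (α : Web σ) :
    Sem (rename r M) ρ α ↔ Sem M (fun τ v => ρ τ (r τ v)) α := by
  induction M generalizing Δ with
  | var v => rfl
  | lam M ih =>
    refine (ih _ _ _).trans (iff_of_eq ?_)
    congr 1
    funext τ v
    cases v <;> rfl
  | app M N ihM ihN =>
    exact exists_congr fun Y => and_congr (ihM r ρ _) (forall₂_congr fun β _ => ihN r ρ β)

def REnv.add (ρ ρ' : REnv Γ) : REnv Γ := fun τ v => ρ τ v + ρ' τ v

theorem sem_add_of_left (M : Tm Γ σ) {η : REnv Γ} (η' : REnv Γ) {α : Web σ} (h : Sem M η α) :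
    Sem M (η.add η') α :=
  sem_mono M (fun _ _ => Multiset.subset_of_le (Multiset.le_add_right _ _)) h

theorem sem_add_of_right (M : Tm Γ σ) (η : REnv Γ) {η' : REnv Γ} {α : Web σ} (h : Sem M η' α) :
    Sem M (η.add η') α :=
  sem_mono M (fun _ _ => Multiset.subset_of_le (Multiset.le_add_left _ _)) h

def REnv.single : {Γ : List Ty} → {σ : Ty} → Var Γ σ → Multiset (Web σ) → REnv Γ
  | _, _, .zero, X => REnv.cons X fun _ _ => 0
  | _, _, .succ v, X => REnv.cons 0 (REnv.single v X)

theorem REnv.mem_single_self : ∀ {Γ σ} (v : Var Γ σ) (α : Web σ), α ∈ REnv.single v {α} σ v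
  | _, _, .zero, α => Multiset.mem_singleton_self α
  | _, _, .succ v, α => REnv.mem_single_self v α

def SemSubst (s : Subst Γ Δ) (η : REnv Γ) (ρ : REnv Δ) : Prop :=
  ∀ τ v, ∀ β ∈ η τ v, Sem (s τ v) ρ β

namespace SemSubst

variable {s : Subst Γ Δ} {ρ : REnv Δ}

theorem zero : SemSubst s (fun _ _ => 0) ρ :=
  fun _ _ _ hβ => absurd hβ (Multiset.notMem_zero _)

theorem add {η η' : REnv Γ} (h : SemSubst s η ρ) (h' : SemSubst s η' ρ) :
    SemSubst s (η.add η') ρ := fun τ v β hβ =>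
  (Multiset.mem_add.mp hβ).elim (h τ v β) (h' τ v β)

theorem lift {η : REnv Γ} (h : SemSubst s η ρ) (X : Multiset (Web σ)) :
    SemSubst (s.lift σ) (η.cons X) (ρ.cons X) := by
  rintro τ (_ | w) β hβ
  · exact hβ
  · exact (sem_rename _ _ _ _).mpr (h τ w β hβ)

theorem single : ∀ {Γ σ} {s : Subst Γ Δ} (v : Var Γ σ) {α : Web σ}, Sem (s σ v) ρ α →
    SemSubst s (REnv.single v {α}) ρ
  | _, _, _, .zero, _, hα => by
    rintro τ (_ | w) β hβ
    · rw [Multiset.mem_singleton.mp hβ]; exact hα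
    · exact absurd hβ (Multiset.notMem_zero _)
  | _, _, s, .succ v, _, hα => by
    rintro τ (_ | w) β hβ
    · exact absurd hβ (Multiset.notMem_zero _)
    · exact single (s := fun τ w => s τ w.succ) v hα τ w β hβ

theorem exists_forall_mem_sem {N : Tm Γ σ}
    (Y : Multiset (Web σ)) (h : ∀ β ∈ Y, ∃ η, SemSubst s η ρ ∧ Sem N η β) :
    ∃ η, SemSubst s η ρ ∧ ∀ β ∈ Y, Sem N η β := by
  induction Y using Multiset.induction_on with
  | empty => exact ⟨_, .zero, fun β hβ => absurd hβ (Multiset.notMem_zero β)⟩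
  | cons b Y ih =>
    obtain ⟨η, hη, hY⟩ := ih fun β hβ => h β (Multiset.mem_cons_of_mem hβ)
    obtain ⟨ηb, hηb, hb⟩ := h b (Multiset.mem_cons_self b Y)
    refine ⟨ηb.add η, hηb.add hη, fun β hβ => ?_⟩
    rcases Multiset.mem_cons.mp hβ with rfl | hβ
    · exact sem_add_of_left N η hb
    · exact sem_add_of_right N ηb (hY β hβ)

end SemSubst

theorem sem_subst_of_semSubst (M : Tm Γ σ) {s : Subst Γ Δ} {η : REnv Γ} {ρ : REnv Δ}
    (hs : SemSubst s η ρ) {α : Web σ} (hM : Sem M η α) : Sem (subst s M) ρ α := by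
  induction M generalizing Δ with
  | var v => exact hs _ v α hM
  | lam M ih => exact ih (hs.lift _) hM
  | app M N ihM ihN =>
    obtain ⟨Y, hMY, hN⟩ := hM
    exact ⟨Y, ihM hs hMY, fun β hβ => ihN hs (hN β hβ)⟩

theorem exists_semSubst_of_sem_subst (M : Tm Γ σ) {s : Subst Γ Δ} {ρ : REnv Δ} {α : Web σ}
    (hM : Sem (subst s M) ρ α) : ∃ η, SemSubst s η ρ ∧ Sem M η α := by
  induction M generalizing Δ with
  | var v => exact ⟨_, .single v hM, REnv.mem_single_self v α⟩
  | lam M ih =>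
    obtain ⟨η, hη, hMη⟩ := ih hM
    refine ⟨fun τ v => η τ v.succ, fun τ v β hβ => ?_, sem_mono M ?_ hMη⟩
    · exact (sem_rename (s τ v) (fun _ u => u.succ) _ β).mp (hη τ v.succ β hβ)
    rintro τ (_ | w)
    · exact hη _ .zero
    · exact Multiset.Subset.refl _
  | app M N ihM ihN =>
    obtain ⟨Y, hMY, hN⟩ := hM
    obtain ⟨η, hη, hMη⟩ := ihM hMY
    obtain ⟨η', hη', hNη'⟩ := SemSubst.exists_forall_mem_sem Y fun β hβ => ihN (hN β hβ)
    exact ⟨η.add η', hη.add hη', Y, sem_add_of_left M η' hMη,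
      fun β hβ => sem_add_of_right N η (hNη' β hβ)⟩

theorem sem_beta (M : Tm (σ :: Γ) τ) (N : Tm Γ σ) (ρ : REnv Γ) (α : Web τ) :
    Sem (Tm.app M.lam N) ρ α ↔ Sem (subst1 M N) ρ α := by
  refine ⟨fun ⟨Y, hM, hN⟩ => sem_subst_of_semSubst M ?_ hM, fun h => ?_⟩
  · rintro _ (_ | w) β hβ
    · exact hN β hβ
    · exact hβ
  · obtain ⟨η, hη, hM⟩ := exists_semSubst_of_sem_subst M h
    refine ⟨η σ .zero, sem_mono M ?_ hM, hη σ .zero⟩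
    rintro τ' (_ | w)
    · exact Multiset.Subset.refl _
    · exact hη τ' w.succ

theorem BetaStep.sem_iff {M M' : Tm Γ σ} (h : BetaStep M M') (ρ : REnv Γ) (α : Web σ) :
    Sem M ρ α ↔ Sem M' ρ α := by
  induction h with
  | beta M N => exact sem_beta M N ρ α
  | appLeft N _ ih => exact exists_congr fun Y => and_congr (ih ρ (Y, α)) Iff.rfl
  | appRight M _ ih =>
    exact exists_congr fun Y => and_congr Iff.rfl (forall₂_congr fun β _ => ih ρ β)
  | lam _ ih => exact ih _ α.2

theorem BetaSteps.sem_iff {M M' : Tm Γ σ} (h : BetaSteps M M') (ρ : REnv Γ) (α : Web σ) :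
    Sem M ρ α ↔ Sem M' ρ α := by
  induction h with
  | refl => rfl
  | tail _ h ih => exact ih.trans (h.sem_iff ρ α)

end RelationalSemantics

def Ty.SetInterp : Ty → Type
  | .o => ℕ
  | .arrow σ τ => σ.SetInterp → τ.SetInterp

def SetEnv (Γ : List Ty) : Type := ∀ σ, Var Γ σ → σ.SetInterp

def SetEnv.cons {Γ : List Ty} {σ : Ty} (x : σ.SetInterp) (ρ : SetEnv Γ) : SetEnv (σ :: Γ) :=
  fun _ v =>
    match v with
    | .zero => x
    | .succ w => ρ _ w

def Tm.eval : {Γ : List Ty} → {σ : Ty} → Tm Γ σ → SetEnv Γ → σ.SetInterp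
  | _, _, .var v, ρ => ρ _ v
  | _, _, .lam M, ρ => fun x => M.eval (SetEnv.cons x ρ)
  | _, _, .app M N, ρ => M.eval ρ (N.eval ρ)

namespace Tm

variable {Γ Δ : List Ty} {σ : Ty}

theorem eval_rename (M : Tm Γ σ) (r : Ren Γ Δ) (ρ : SetEnv Δ) :
    (rename r M).eval ρ = M.eval fun τ v => ρ τ (r τ v) := by
  induction M generalizing Δ with
  | var v => rfl
  | lam M ih =>
    funext x
    refine (ih _ _).trans ?_
    congr 1
    funext τ v
    cases v <;> rfl
  | app M N ihM ihN => exact congr (ihM r ρ) (ihN r ρ)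

theorem eval_subst (M : Tm Γ σ) (s : Subst Γ Δ) (ρ : SetEnv Δ) :
    (subst s M).eval ρ = M.eval fun τ v => (s τ v).eval ρ := by
  induction M generalizing Δ with
  | var v => rfl
  | lam M ih =>
    funext x
    refine (ih _ _).trans ?_
    congr 1
    funext τ v
    cases v with
    | zero => rfl
    | succ w => exact eval_rename (s τ w) _ _
  | app M N ihM ihN => exact congr (ihM s ρ) (ihN s ρ)

theorem eval_eq_of_betaEta {M N : Tm Γ σ} (h : BetaEta M N) (ρ : SetEnv Γ) :
    M.eval ρ = N.eval ρ := by
  induction h with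
  | refl M => rfl
  | symm _ ih => exact (ih ρ).symm
  | trans _ _ ih₁ ih₂ => exact (ih₁ ρ).trans (ih₂ ρ)
  | app_congr _ _ ihM ihN => simp only [eval, ihM, ihN]
  | lam_congr _ ih => exact funext fun x => ih _
  | beta M N =>
    show M.eval (SetEnv.cons (N.eval ρ) ρ) = _
    rw [subst1, eval_subst]
    congr 1
    funext τ v
    cases v <;> rfl
  | eta M =>
    funext x
    exact (congrFun (eval_rename M (fun _ v => Var.succ v) (SetEnv.cons x ρ)) x).symm

end Tm

theorem not_betaEta_churchTrue_churchFalse : ¬ BetaEta churchTrue churchFalse := fun h =>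
  have heval := Tm.eval_eq_of_betaEta h fun _ v => nomatch v
  zero_ne_one (α := ℕ) (congrFun (congrFun heval (0 : ℕ)) (1 : ℕ))

theorem relType_churchTrue (ast : Web Ty.o) : RelType churchTrue (boolPoint ast) :=
  Multiset.mem_singleton_self ast

theorem not_relType_churchFalse (ast : Web Ty.o) : ¬ RelType churchFalse (boolPoint ast) :=
  Multiset.notMem_zero ast

/-- Let `M` be a closed simply-typed λ-term of type
`𝐁 = o → o → o`. Then `M =βη 𝐭𝐫𝐮𝐞` if and only if the relational point
`[∗] → ∅ → ∗` belongs to the relational interpretation of `M`,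
where `∗` is a fixed atom of the base-type web. -/
theorem boolean_semantic_evaluation (ast : Web Ty.o) (M : Tm [] TyB) :
    BetaEta M churchTrue ↔ RelType M (boolPoint ast) := by
  obtain ⟨N, hMN, hN⟩ := M.weaklyNormalizing
  have hsem : RelType M (boolPoint ast) ↔ RelType N (boolPoint ast) := hMN.sem_iff _ _
  rcases hN.eq_churchTrue_or_eq_churchFalse with rfl | rfl
  · exact iff_of_true hMN.betaEta (hsem.mpr (relType_churchTrue ast))
  · refine iff_of_false (fun h => not_betaEta_churchTrue_churchFalse ?_) ?_
    · exact h.symm.trans hMN.betaEta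
    · exact fun h => not_relType_churchFalse ast (hsem.mp h)
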